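/- In the noisy ordered pairwise comparison model with parameters k ∈ ℕ and p ∈ [0, 1], the covariance of X_i and X_j equals kp(1 − p)(1 − 2p). -/

import Mathlib

/-!
Conditionally on the first draw `x ~ Bin(k, p)`, the counts `X_i = b₁ + x` and
`X_j = b₂ + c + d` are independent, with conditional means `kp + x` and
`kp + (1 - p)x + p(k - x) = 2kp + (1 - 2p)x`. So the covariance of `X_i` and `X_j` is the
covariance of these two affine functions of `x`, namely `(1 - 2p) Var(x) = (1 - 2p)kp(1 - p)`.
The binomial mean and variance are the Bernstein polynomial identities `∑ ν b_{n,ν} = nX` and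
`∑ (nX - ν)² b_{n,ν} = nX(1 - X)`.
-/

set_option linter.deprecated false

open MeasureTheory ProbabilityTheory

/-- The joint distribution of the follower counts `(X_i, X_j)` of the higher-quality
creator `CC_i` and the lower-quality creator `CC_j` in the noisy ordered pairwise
comparison model with group size `k` and signal `p ∈ [0, 1]`:
draw `x ~ Binomial(k, p)` (followers of `CC_i` from the `(i, j)` group at step 1);
independently draw `b₁ ~ Binomial(k, p)`, `b₂ ~ Binomial(k, p)`, `c ~ Binomial(x, 1 − p)`
and `d ~ Binomial(k − x, p)`; set `X_i = b₁ + x` and `X_j = b₂ + c + d`. -/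
noncomputable def noisyPair (k : ℕ) (p : ℝ) (hp0 : 0 ≤ p) (hp1 : p ≤ 1) : PMF (ℕ × ℕ) :=
  (PMF.binomial (Real.toNNReal p) (Real.toNNReal_le_one.mpr hp1) k).bind fun x =>
  (PMF.binomial (Real.toNNReal p) (Real.toNNReal_le_one.mpr hp1) k).bind fun b₁ =>
  (PMF.binomial (Real.toNNReal p) (Real.toNNReal_le_one.mpr hp1) k).bind fun b₂ =>
  (PMF.binomial (1 - Real.toNNReal p) tsub_le_self (x : ℕ)).bind fun c =>
  (PMF.binomial (Real.toNNReal p) (Real.toNNReal_le_one.mpr hp1) (k - (x : ℕ))).map fun d =>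
  ((b₁ : ℕ) + (x : ℕ), (b₂ : ℕ) + (c : ℕ) + (d : ℕ))

open scoped NNReal

universe u

namespace PMF

theorem toMeasure_bind_eq_sum {α β : Type*} [Fintype α] [MeasurableSpace β] (p : PMF α)
    (g : α → PMF β) : (p.bind g).toMeasure = ∑ a, p a • (g a).toMeasure := by
  ext s hs
  simp [toMeasure_bind_apply p g s hs, tsum_fintype]

theorem integrable_bind {α β : Type*} [Fintype α] [MeasurableSpace β] {f : β → ℝ} {p : PMF α}
    {g : α → PMF β} (hf : ∀ a, Integrable f (g a).toMeasure) :
    Integrable f (p.bind g).toMeasure := by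
  rw [toMeasure_bind_eq_sum, integrable_finset_sum_measure]
  exact fun a _ => (hf a).smul_measure (p.apply_ne_top a)

theorem integral_bind {α β : Type*} [Fintype α] [MeasurableSpace α] [MeasurableSingletonClass α]
    [MeasurableSpace β] {f : β → ℝ} {p : PMF α} {g : α → PMF β}
    (hf : ∀ a, Integrable f (g a).toMeasure) :
    ∫ b, f b ∂(p.bind g).toMeasure = ∫ a, ∫ b, f b ∂(g a).toMeasure ∂p.toMeasure := by
  rw [toMeasure_bind_eq_sum,
    integral_finset_sum_measure fun a _ => (hf a).smul_measure (p.apply_ne_top a), integral_eq_sum]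
  simp [integral_smul_measure]

section map

variable {α β : Type*} [MeasurableSpace α] [DiscreteMeasurableSpace α] [MeasurableSpace β]
  [DiscreteMeasurableSpace β] {f : β → ℝ}

theorem integral_map (p : PMF α) (h : α → β) :
    ∫ b, f b ∂(p.map h).toMeasure = ∫ a, f (h a) ∂p.toMeasure := by
  rw [← toMeasure_map h p .of_discrete,
    MeasureTheory.integral_map .of_discrete Measurable.of_discrete.aestronglyMeasurable]

theorem integrable_map [Finite α] (p : PMF α) (h : α → β) : Integrable f (p.map h).toMeasure := by
  rw [← toMeasure_map h p .of_discrete]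
  exact (integrable_map_measure Measurable.of_discrete.aestronglyMeasurable .of_discrete).2
    .of_finite

end map

theorem monad_bind_eq_bind {α β : Type u} (p : PMF α) (f : α → PMF β) : p >>= f = p.bind f :=
  rfl

theorem monad_pure_eq_pure {α : Type u} (a : α) : (Pure.pure a : PMF α) = PMF.pure a := rfl

theorem bind_pure_eq_map {α β : Type*} (p : PMF α) (f : α → β) :
    (p.bind fun a => pure (f a)) = p.map f :=
  rfl

theorem binomial_toReal_eq_eval_bernsteinPolynomial (q : ℝ≥0) (hq : q ≤ 1) (n : ℕ)
    (i : Fin (n + 1)) : (binomial q hq n i).toReal = (bernsteinPolynomial ℝ n i).eval (q : ℝ) := by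
  rw [binomial_apply, bernsteinPolynomial, Fin.val_last]
  simp only [ENNReal.toReal_mul, ENNReal.toReal_pow, ENNReal.coe_toReal,
    ENNReal.toReal_sub_of_le (ENNReal.coe_le_one_iff.2 hq) ENNReal.one_ne_top, ENNReal.toReal_one,
    ENNReal.toReal_natCast, Polynomial.eval_mul, Polynomial.eval_natCast, Polynomial.eval_pow,
    Polynomial.eval_X, Polynomial.eval_sub, Polynomial.eval_one]
  ring

theorem integral_binomial (q : ℝ≥0) (hq : q ≤ 1) (n : ℕ) (g : ℕ → ℝ) :
    ∫ i, g i ∂(binomial q hq n).toMeasure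
      = ∑ ν ∈ Finset.range (n + 1), g ν * (bernsteinPolynomial ℝ n ν).eval (q : ℝ) := by
  rw [integral_eq_sum, ← Fin.sum_univ_eq_sum_range]
  simp [binomial_toReal_eq_eval_bernsteinPolynomial, mul_comm]

theorem integral_binomial_val (q : ℝ≥0) (hq : q ≤ 1) (n : ℕ) :
    ∫ i, ((i : ℕ) : ℝ) ∂(binomial q hq n).toMeasure = n * q := by
  have h := congrArg (Polynomial.eval (q : ℝ)) (bernsteinPolynomial.sum_smul (R := ℝ) n)
  simpa [integral_binomial, Polynomial.eval_finset_sum] using h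

theorem variance_binomial_val (q : ℝ≥0) (hq : q ≤ 1) (n : ℕ) :
    Var[fun i : Fin (n + 1) => ((i : ℕ) : ℝ); (binomial q hq n).toMeasure] = n * q * (1 - q) := by
  have h := congrArg (Polynomial.eval (q : ℝ)) (bernsteinPolynomial.variance (R := ℝ) n)
  simp only [nsmul_eq_mul, Polynomial.eval_finset_sum, Polynomial.eval_mul, Polynomial.eval_pow,
    Polynomial.eval_sub, Polynomial.eval_natCast, Polynomial.eval_X, Polynomial.eval_one] at h
  rw [variance_eq_integral .of_discrete, integral_binomial_val,
    integral_binomial (g := fun ν => ((ν : ℝ) - n * q) ^ 2), ← h]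
  exact Finset.sum_congr rfl fun ν _ => by ring

end PMF

theorem Real.coe_one_sub_toNNReal {p : ℝ} (hp0 : 0 ≤ p) (hp1 : p ≤ 1) :
    ((1 - p.toNNReal : ℝ≥0) : ℝ) = 1 - p := by
  rw [NNReal.coe_sub (Real.toNNReal_le_one.mpr hp1), NNReal.coe_one, Real.coe_toNNReal p hp0]

theorem integral_affine_mul_affine_sub_integral_mul {Ω : Type*} [MeasurableSpace Ω]
    {μ : Measure Ω} [IsProbabilityMeasure μ] {X : Ω → ℝ} (hX : MemLp X 2 μ) (a b c d : ℝ) :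
    ∫ ω, (a + b * X ω) * (c + d * X ω) ∂μ - (∫ ω, a + b * X ω ∂μ) * ∫ ω, c + d * X ω ∂μ
      = b * d * Var[X; μ] := by
  have hY : MemLp (fun ω => a + b * X ω) 2 μ := (memLp_const a).add (hX.const_mul b)
  have hZ : MemLp (fun ω => c + d * X ω) 2 μ := (memLp_const c).add (hX.const_mul d)
  calc _ = cov[fun ω => a + b * X ω, fun ω => c + d * X ω; μ] := (covariance_eq_sub hY hZ).symm
    _ = b * d * Var[X; μ] := by
      rw [covariance_const_add_left ((hX.const_mul b).integrable one_le_two),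
        covariance_const_add_right ((hX.const_mul d).integrable one_le_two),
        covariance_const_mul_left, covariance_const_mul_right, covariance_self hX.aemeasurable]
      ring

section noisyPair

variable (k : ℕ) (p : ℝ) (hp0 : 0 ≤ p) (hp1 : p ≤ 1)

theorem integral_noisyPair (f : ℕ × ℕ → ℝ) :
    ∫ ω, f ω ∂(noisyPair k p hp0 hp1).toMeasure =
      ∫ x, ∫ b₁, ∫ b₂, ∫ c, ∫ d, f (b₁ + x, b₂ + c + d)
        ∂(PMF.binomial p.toNNReal (Real.toNNReal_le_one.mpr hp1) (k - x)).toMeasure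
        ∂(PMF.binomial (1 - p.toNNReal) tsub_le_self x).toMeasure
        ∂(PMF.binomial p.toNNReal (Real.toNNReal_le_one.mpr hp1) k).toMeasure
        ∂(PMF.binomial p.toNNReal (Real.toNNReal_le_one.mpr hp1) k).toMeasure
        ∂(PMF.binomial p.toNNReal (Real.toNNReal_le_one.mpr hp1) k).toMeasure := by
  -- the coercion `Fin (k - x + 1) → ℕ` of the last draw elaborates as a monadic lift
  simp only [noisyPair, PMF.monad_bind_eq_bind, PMF.monad_pure_eq_pure, PMF.bind_pure_eq_map,
    PMF.map_comp]
  simp (disch := (intro; repeat (apply PMF.integrable_bind; intro)); exact PMF.integrable_map _ _)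
    only [PMF.integral_bind, PMF.integral_map, Function.comp_apply]

theorem integral_noisyPair_fst :
    ∫ ω, (ω.1 : ℝ) ∂(noisyPair k p hp0 hp1).toMeasure =
      ∫ x, (k * p + x) ∂(PMF.binomial p.toNNReal (Real.toNNReal_le_one.mpr hp1) k).toMeasure := by
  rw [integral_noisyPair]
  refine integral_congr_ae (ae_of_all _ fun x => ?_)
  simp (disch := exact Integrable.of_finite) only [Nat.cast_add, integral_add, integral_const,
    probReal_univ, smul_eq_mul, one_mul, PMF.integral_binomial_val, Real.coe_toNNReal',
    max_eq_left hp0]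

theorem integral_noisyPair_snd :
    ∫ ω, (ω.2 : ℝ) ∂(noisyPair k p hp0 hp1).toMeasure =
      ∫ x, (2 * k * p + (1 - 2 * p) * x)
        ∂(PMF.binomial p.toNNReal (Real.toNNReal_le_one.mpr hp1) k).toMeasure := by
  rw [integral_noisyPair]
  refine integral_congr_ae (ae_of_all _ fun x => ?_)
  simp (disch := exact Integrable.of_finite) only [Nat.cast_add, integral_add, integral_const,
    probReal_univ, smul_eq_mul, one_mul, PMF.integral_binomial_val, Nat.cast_sub x.is_le,
    Real.coe_toNNReal', max_eq_left hp0, Real.coe_one_sub_toNNReal hp0 hp1]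
  ring

theorem integral_noisyPair_fst_mul_snd :
    ∫ ω, (ω.1 : ℝ) * ω.2 ∂(noisyPair k p hp0 hp1).toMeasure =
      ∫ x, (k * p + x) * (2 * k * p + (1 - 2 * p) * x)
        ∂(PMF.binomial p.toNNReal (Real.toNNReal_le_one.mpr hp1) k).toMeasure := by
  rw [integral_noisyPair]
  refine integral_congr_ae (ae_of_all _ fun x => ?_)
  simp (disch := exact Integrable.of_finite) only [Nat.cast_add, integral_const_mul,
    integral_mul_const, integral_add, integral_const, probReal_univ, smul_eq_mul, one_mul,
    PMF.integral_binomial_val, Nat.cast_sub x.is_le, Real.coe_toNNReal', max_eq_left hp0,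
    Real.coe_one_sub_toNNReal hp0 hp1]
  ring

end noisyPair

/-- In the noisy ordered pairwise comparison model with parameters
`k ∈ ℕ` and `p ∈ [0, 1]`, the covariance `Cov(X_i, X_j) = E[X_i·X_j] − E[X_i]·E[X_j]`
equals `kp(1 − p)(1 − 2p)`. -/
theorem covariance_Xi_Xj (k : ℕ) (p : ℝ) (hp0 : 0 ≤ p) (hp1 : p ≤ 1) :
    (∫ ω, ((ω.1 : ℕ) : ℝ) * ((ω.2 : ℕ) : ℝ) ∂(noisyPair k p hp0 hp1).toMeasure) -
      (∫ ω, ((ω.1 : ℕ) : ℝ) ∂(noisyPair k p hp0 hp1).toMeasure) *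
      (∫ ω, ((ω.2 : ℕ) : ℝ) ∂(noisyPair k p hp0 hp1).toMeasure)
      = k * p * (1 - p) * (1 - 2 * p) := by
  have hcov := integral_affine_mul_affine_sub_integral_mul
    (μ := (PMF.binomial p.toNNReal (Real.toNNReal_le_one.mpr hp1) k).toMeasure)
    (X := fun x => ((x : ℕ) : ℝ)) MemLp.of_discrete (k * p) 1 (2 * k * p) (1 - 2 * p)
  simp only [one_mul] at hcov
  rw [integral_noisyPair_fst_mul_snd, integral_noisyPair_fst, integral_noisyPair_snd, hcov,
    PMF.variance_binomial_val, Real.coe_toNNReal p hp0]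
  ring
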